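/- Combining the partition-deletion bound with c-approximate solutions on pieces: if V(G) is partitioned into S_0,...,S_l, and for each i the graph G restricted to V \ S_i decomposes into disjoint components on which one can find independent sets of size at least c times optimal, then the best over i of the resulting independent sets has size at least c · (l/(l+1)) · α(G). In particular, with c = l/(l+1) one obtains size at least (l/(l+1))² · α(G). -/
import Mathlib


/-- A finset of vertices is independent in `G`. -/
def IndepOn {V : Type*} (G : SimpleGraph V) (A : Finset V) : Prop :=
  ∀ u ∈ A, ∀ v ∈ A, ¬ G.Adj u v

/-- Maximum size of an independent set of `G` contained in `W`
(i.e. the independence number of the subgraph induced on `W`). -/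
noncomputable def alphaOn {V : Type*} (G : SimpleGraph V) (W : Finset V) : ℕ :=
  sSup {n | ∃ A : Finset V, A ⊆ W ∧ IndepOn G A ∧ A.card = n}

lemma alphaOn_spec {V : Type*} (G : SimpleGraph V) (W : Finset V) :
    (∃ A : Finset V, A ⊆ W ∧ IndepOn G A ∧ A.card = alphaOn G W) ∧
    ∀ A : Finset V, A ⊆ W → IndepOn G A → A.card ≤ alphaOn G W := by
  have hbdd : BddAbove {n | ∃ A : Finset V, A ⊆ W ∧ IndepOn G A ∧ A.card = n} := by
    refine ⟨W.card, ?_⟩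
    rintro n ⟨A, hA, -, rfl⟩
    exact Finset.card_le_card hA
  have hne : (0 : ℕ) ∈ {n | ∃ A : Finset V, A ⊆ W ∧ IndepOn G A ∧ A.card = n} :=
    ⟨∅, by simp, fun u hu => by simp at hu, by simp⟩
  constructor
  · have := Nat.sSup_mem ⟨0, hne⟩ hbdd
    exact this.imp fun A hA => ⟨hA.1, hA.2.1, hA.2.2⟩
  · intro A hsub hind
    exact le_csSup hbdd ⟨A, hsub, hind, rfl⟩

theorem stmt5 {V : Type*} [Fintype V] [DecidableEq V] (G : SimpleGraph V) (l : ℕ)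
    (hl : 1 ≤ l)
    (S : Fin (l + 1) → Finset V)
    (hdisj : ∀ i j, i ≠ j → Disjoint (S i) (S j))
    (hunion : Finset.univ.biUnion S = Finset.univ)
    (c : ℚ) (hc0 : 0 ≤ c) (hc1 : c ≤ 1)
    (B : Fin (l + 1) → Finset V)
    (hBsub : ∀ i, B i ⊆ Finset.univ \ S i)
    (hBind : ∀ i, IndepOn G (B i))
    (hBsize : ∀ i, c * (alphaOn G (Finset.univ \ S i) : ℚ) ≤ ((B i).card : ℚ)) :
    ∃ i : Fin (l + 1),
      c * ((l : ℚ) / ((l : ℚ) + 1)) * (alphaOn G Finset.univ : ℚ)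
        ≤ ((B i).card : ℚ) := by
  obtain ⟨⟨A, hAsub, hAind, hAcard⟩, -⟩ := alphaOn_spec G (Finset.univ : Finset V)
  -- sum of intersections equals |A|
  have hsum : ∑ j : Fin (l + 1), (A ∩ S j).card = A.card := by
    rw [← Finset.card_biUnion]
    · congr 1
      ext x
      simp only [Finset.mem_biUnion, Finset.mem_inter, Finset.mem_univ, true_and]
      constructor
      · rintro ⟨j, hx, -⟩; exact hx
      · intro hx
        have : x ∈ Finset.univ.biUnion S := by rw [hunion]; exact Finset.mem_univ x
        obtain ⟨j, -, hj⟩ := Finset.mem_biUnion.mp this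
        exact ⟨j, hx, hj⟩
    · intro i hi j hj hij
      exact (hdisj i j hij).mono Finset.inter_subset_right Finset.inter_subset_right
  obtain ⟨i, -, hi⟩ := Finset.exists_min_image (Finset.univ : Finset (Fin (l + 1)))
    (fun j => (A ∩ S j).card) ⟨0, Finset.mem_univ 0⟩
  set m := (A ∩ S i).card with hm
  have hmin : (l + 1) * m ≤ A.card := by
    calc (l + 1) * m = ∑ _j : Fin (l + 1), m := by
          simp [Finset.sum_const, Finset.card_univ, mul_comm]
      _ ≤ ∑ j : Fin (l + 1), (A ∩ S j).card :=
          Finset.sum_le_sum fun j _ => hi j (Finset.mem_univ j)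
      _ = A.card := hsum
  have hmle : m ≤ A.card := Finset.card_le_card Finset.inter_subset_left
  have halpha : A.card - m ≤ alphaOn G (Finset.univ \ S i) := by
    have hcard : (A \ S i).card = A.card - m := by
      rw [← Finset.sdiff_inter_self_left A (S i), Finset.card_sdiff_of_subset Finset.inter_subset_left]
    rw [← hcard]
    apply (alphaOn_spec G (Finset.univ \ S i)).2 (A \ S i)
    · exact Finset.sdiff_subset_sdiff (Finset.subset_univ A) le_rfl
    · intro u hu v hv
      exact hAind u (Finset.mem_sdiff.mp hu).1 v (Finset.mem_sdiff.mp hv).1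
  refine ⟨i, ?_⟩
  have hlq : (0 : ℚ) < (l : ℚ) + 1 := by positivity
  have h1 : ((A.card : ℚ) - m) ≤ (alphaOn G (Finset.univ \ S i) : ℚ) := by
    have := halpha
    push_cast [Nat.cast_sub hmle] at this ⊢
    exact_mod_cast this
  have hminq : ((l : ℚ) + 1) * m ≤ (A.card : ℚ) := by exact_mod_cast hmin
  calc c * ((l : ℚ) / ((l : ℚ) + 1)) * (alphaOn G Finset.univ : ℚ)
      = c * (((l : ℚ) / ((l : ℚ) + 1)) * (A.card : ℚ)) := by
        rw [← hAcard]; ring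
    _ ≤ c * ((A.card : ℚ) - m) := by
        apply mul_le_mul_of_nonneg_left _ hc0
        rw [div_mul_eq_mul_div, div_le_iff₀ hlq]
        nlinarith
    _ ≤ c * (alphaOn G (Finset.univ \ S i) : ℚ) := mul_le_mul_of_nonneg_left h1 hc0
    _ ≤ ((B i).card : ℚ) := hBsize i
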